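/- For every real number μ with |μ| ≥ 1: maxT(μ,β) ≥ 1 for all β ∈ ℝ, and maxT(μ,−1) = 1; hence min_{β∈ℝ} maxT(μ,β) = 1. -/

import Mathlib

/-!
Let `x, y` be the roots, so `x + y = (1 + β)μ` and `xy = β`. Evaluating the polynomial at `±1`
gives `(1 - x²)(1 - y²) = p(1) p(-1) = (1 + β)²(1 - μ²) ≤ 0`. If both roots lay in the open unit
disc, both factors `1 - x²`, `1 - y²` would lie in the right half-plane, and a real product of two
such numbers is positive. For `β = -1` the roots are `±1`.
-/

/-- The maximum of the moduli of the two complex roots (counted with multiplicity) of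
`λ² − (1+β)·μ·λ + β = 0`; the roots are given by the quadratic formula
`((1+β)μ ± √((1+β)²μ² − 4β))/2` (complex square root via `cpow`). -/
noncomputable def maxT (μ β : ℝ) : ℝ :=
  max (Norm.norm (((((1 + β) * μ : ℝ) : ℂ) +
        ((((1 + β) ^ 2 * μ ^ 2 - 4 * β : ℝ) : ℂ)) ^ ((1 : ℂ) / 2)) / 2))
      (Norm.norm (((((1 + β) * μ : ℝ) : ℂ) -
        ((((1 + β) ^ 2 * μ ^ 2 - 4 * β : ℝ) : ℂ)) ^ ((1 : ℂ) / 2)) / 2))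

/-- The optimal coefficient `βN(μ) = (1 − √(1−μ²))/(1 + √(1−μ²))`. -/
noncomputable def βN (μ : ℝ) : ℝ :=
  (1 - Real.sqrt (1 - μ ^ 2)) / (1 + Real.sqrt (1 - μ ^ 2))

namespace Complex

lemma re_mul_pos_of_im_mul_eq_zero {u v : ℂ} (hu : 0 < u.re) (hv : 0 < v.re)
    (huv : (u * v).im = 0) : 0 < (u * v).re := by
  have key : u.re * (u * v).re = (u.re ^ 2 + u.im ^ 2) * v.re := by
    rw [mul_im] at huv
    rw [mul_re]
    linear_combination (-u.im) * huv
  have : 0 < u.re * (u * v).re := by rw [key]; positivity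
  exact pos_of_mul_pos_right this hu.le

lemma re_one_sub_sq_pos {x : ℂ} (hx : ‖x‖ < 1) : 0 < (1 - x ^ 2).re := by
  have : (x ^ 2).re < 1 := by
    calc (x ^ 2).re ≤ ‖x ^ 2‖ := re_le_norm _
      _ = ‖x‖ ^ 2 := norm_pow x 2
      _ < 1 := by nlinarith [norm_nonneg x]
  simpa using this

end Complex

open Complex in
lemma one_le_max_norm_of_add_of_mul {x y : ℂ} {s β : ℝ} (hsum : x + y = s) (hprod : x * y = β)
    (hs : |1 + β| ≤ |s|) : 1 ≤ max ‖x‖ ‖y‖ := by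
  by_contra! hlt
  obtain ⟨hx, hy⟩ := max_lt_iff.mp hlt
  -- `(1 - x²)(1 - y²) = p(1) p(-1)` for `p(λ) = λ² - sλ + β`
  have hfactor : (1 - x ^ 2) * (1 - y ^ 2) = (((1 + β) ^ 2 - s ^ 2 : ℝ) : ℂ) := by
    push_cast
    linear_combination (x * y + β + 2) * hprod - (x + y + s) * hsum
  have hpos := re_mul_pos_of_im_mul_eq_zero (re_one_sub_sq_pos hx) (re_one_sub_sq_pos hy)
    (by rw [hfactor, ofReal_im])
  rw [hfactor, ofReal_re] at hpos
  nlinarith [sq_abs (1 + β), sq_abs s, abs_nonneg (1 + β)]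

lemma one_le_max_norm_quadratic_roots {s β : ℝ} {w : ℂ} (hw : w ^ 2 = s ^ 2 - 4 * β)
    (hs : |1 + β| ≤ |s|) : 1 ≤ max ‖(s + w) / 2‖ ‖(s - w) / 2‖ :=
  one_le_max_norm_of_add_of_mul (by ring) (by linear_combination -hw / 4) hs

theorem stmt15 (μ : ℝ) (h : 1 ≤ |μ|) :
    (∀ β : ℝ, 1 ≤ maxT μ β) ∧ maxT μ (-1) = 1 := by
  constructor
  · intro β
    refine one_le_max_norm_quadratic_roots (β := β) ?_ ?_
    · rw [one_div, Complex.cpow_ofNat_inv_pow]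
      push_cast
      ring
    · rw [abs_mul]
      exact le_mul_of_one_le_right (abs_nonneg _) h
  · have h4 : (4 : ℂ) ^ ((1 : ℂ) / 2) = 2 := by
      rw [show (4 : ℂ) = 2 ^ 2 by norm_num, one_div, Complex.sq_cpow_two_inv (by norm_num)]
    norm_num [maxT, h4]
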